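/- arXiv:2310.07484 — 9 statements merged into one kernel-verified Lean document; each statement's English description precedes it below -/
import Mathlib

section
/- Let A0, A1, B0, B1 be self-adjoint operators on a (finite-dimensional or Hilbert) space with A_x² = 1, B_y² = 1, [A_x, B_y] = 0 for all x, y. For θ ∈ [0, π/4], define the Bell operator J = tanθ·A0B0 + A0B1 + A1B0 − tanθ·A1B1. Then the operator norm satisfies ‖J‖ ≤ 2/cosθ. -/
open Real

set_option maxHeartbeats 1000000 in
/-- Quantum (Tsirelson-type) bound for the Bell operator `J^θ`. -/
theorem stmt1 {H : Type*} [NormedAddCommGroup H] [InnerProductSpace ℂ H] [CompleteSpace H]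
    (A0 A1 B0 B1 : H →L[ℂ] H)
    (hA0 : IsSelfAdjoint A0) (hA1 : IsSelfAdjoint A1)
    (hB0 : IsSelfAdjoint B0) (hB1 : IsSelfAdjoint B1)
    (hA0sq : A0 * A0 = 1) (hA1sq : A1 * A1 = 1)
    (hB0sq : B0 * B0 = 1) (hB1sq : B1 * B1 = 1)
    (hc00 : Commute A0 B0) (hc01 : Commute A0 B1)
    (hc10 : Commute A1 B0) (hc11 : Commute A1 B1)
    (θ : ℝ) (hθ : θ ∈ Set.Icc 0 (π / 4)) :
    ‖(Real.tan θ : ℂ) • (A0 * B0) + A0 * B1 + A1 * B0 - (Real.tan θ : ℂ) • (A1 * B1)‖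
      ≤ 2 / Real.cos θ := by
  obtain ⟨hθ0, hθ1⟩ := hθ
  have hpi := Real.pi_pos
  have hcpos : 0 < Real.cos θ := Real.cos_pos_of_mem_Ioo ⟨by linarith, by linarith⟩
  set cc : ℂ := (Real.cos θ : ℂ) with hcc
  set ss : ℂ := (Real.sin θ : ℂ) with hss
  set J : H →L[ℂ] H :=
    (Real.tan θ : ℂ) • (A0 * B0) + A0 * B1 + A1 * B0 - (Real.tan θ : ℂ) • (A1 * B1) with hJ
  set K : H →L[ℂ] H :=
    ss • (A0 * B0) + cc • (A0 * B1) + cc • (A1 * B0) - ss • (A1 * B1) with hK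
  have hpyth : ss * ss + cc * cc = 1 := by
    rw [hss, hcc, ← Complex.ofReal_mul, ← Complex.ofReal_mul, ← Complex.ofReal_add]
    norm_cast
    nlinarith [Real.sin_sq_add_cos_sq θ]
  -- cc • J = K
  have hcJ : cc • J = K := by
    have hct : cc * (Real.tan θ : ℂ) = ss := by
      rw [hcc, hss, ← Complex.ofReal_mul]
      norm_cast
      rw [Real.tan_eq_sin_div_cos]
      field_simp
    rw [hJ, hK, smul_sub, smul_add, smul_add, smul_smul, smul_smul, hct]
  -- the key algebraic identity
  have hone : ‖(1 : H →L[ℂ] H)‖ ≤ 1 := by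
    rw [ContinuousLinearMap.one_def]; exact ContinuousLinearMap.norm_id_le
  have hK2 : K * K =
      (2 : ℂ) • (1 : H →L[ℂ] H)
        + (A1 * A0) * ((cc * cc) • (B0 * B1) - (ss * ss) • (B1 * B0))
        + (A0 * A1) * ((cc * cc) • (B1 * B0) - (ss * ss) • (B0 * B1)) := by
    rw [hK]
    simp only [add_mul, mul_add, sub_mul, mul_sub, smul_mul_assoc, mul_smul_comm, smul_smul,
      smul_sub, smul_add]
    simp only [hc00.symm.mul_mul_mul_comm, hc01.symm.mul_mul_mul_comm,
      hc10.symm.mul_mul_mul_comm, hc11.symm.mul_mul_mul_comm]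
    simp only [hA0sq, hA1sq, hB0sq, hB1sq, one_mul, mul_one]
    match_scalars
    all_goals try ring
    all_goals linear_combination (2 : ℂ) * hpyth
  -- norms of the observables
  have hnormle : ∀ (A : H →L[ℂ] H), IsSelfAdjoint A → A * A = 1 → ‖A‖ ≤ 1 := by
    intro A hA hAsq
    have h := CStarRing.norm_star_mul_self (x := A)
    rw [hA.star_eq, hAsq] at h
    nlinarith [norm_nonneg A, hone]
  have hnA0 := hnormle A0 hA0 hA0sq
  have hnA1 := hnormle A1 hA1 hA1sq
  have hnB0 := hnormle B0 hB0 hB0sq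
  have hnB1 := hnormle B1 hB1 hB1sq
  -- bound the two bracket terms
  have hbr : ∀ (P Q : H →L[ℂ] H), ‖P‖ ≤ 1 → ‖Q‖ ≤ 1 →
      ‖(cc * cc) • P - (ss * ss) • Q‖ ≤ 1 := by
    intro P Q hP hQ
    have h1 : ‖(cc * cc) • P - (ss * ss) • Q‖ ≤ ‖(cc * cc) • P‖ + ‖(ss * ss) • Q‖ :=
      norm_sub_le _ _
    rw [norm_smul, norm_smul] at h1
    have hcn : ‖cc * cc‖ = Real.cos θ * Real.cos θ := by
      rw [hcc, norm_mul, Complex.norm_real, Real.norm_eq_abs, abs_of_pos hcpos]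
    have hsn : ‖ss * ss‖ = Real.sin θ * Real.sin θ := by
      have hs0 : 0 ≤ Real.sin θ := Real.sin_nonneg_of_nonneg_of_le_pi hθ0 (by linarith)
      rw [hss, norm_mul, Complex.norm_real, Real.norm_eq_abs, abs_of_nonneg hs0]
    rw [hcn, hsn] at h1
    nlinarith [Real.sin_sq_add_cos_sq θ, norm_nonneg P, norm_nonneg Q,
      mul_pos hcpos hcpos, mul_self_nonneg (Real.sin θ)]
  have hX : ‖(A1 * A0) * ((cc * cc) • (B0 * B1) - (ss * ss) • (B1 * B0))‖ ≤ 1 := by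
    have hb := hbr (B0 * B1) (B1 * B0)
      ((norm_mul_le _ _).trans (by nlinarith [norm_nonneg B0]))
      ((norm_mul_le _ _).trans (by nlinarith [norm_nonneg B1]))
    have hAA : ‖A1 * A0‖ ≤ 1 := (norm_mul_le _ _).trans (by nlinarith [norm_nonneg A1])
    calc ‖(A1 * A0) * ((cc * cc) • (B0 * B1) - (ss * ss) • (B1 * B0))‖
        ≤ ‖A1 * A0‖ * ‖(cc * cc) • (B0 * B1) - (ss * ss) • (B1 * B0)‖ := norm_mul_le _ _
      _ ≤ 1 := by nlinarith [norm_nonneg ((cc * cc) • (B0 * B1) - (ss * ss) • (B1 * B0)),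
          norm_nonneg (A1 * A0)]
  have hY : ‖(A0 * A1) * ((cc * cc) • (B1 * B0) - (ss * ss) • (B0 * B1))‖ ≤ 1 := by
    have hb := hbr (B1 * B0) (B0 * B1)
      ((norm_mul_le _ _).trans (by nlinarith [norm_nonneg B1]))
      ((norm_mul_le _ _).trans (by nlinarith [norm_nonneg B0]))
    have hAA : ‖A0 * A1‖ ≤ 1 := (norm_mul_le _ _).trans (by nlinarith [norm_nonneg A0])
    calc ‖(A0 * A1) * ((cc * cc) • (B1 * B0) - (ss * ss) • (B0 * B1))‖
        ≤ ‖A0 * A1‖ * ‖(cc * cc) • (B1 * B0) - (ss * ss) • (B0 * B1)‖ := norm_mul_le _ _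
      _ ≤ 1 := by nlinarith [norm_nonneg ((cc * cc) • (B1 * B0) - (ss * ss) • (B0 * B1)),
          norm_nonneg (A0 * A1)]
  have hKK : ‖K * K‖ ≤ 4 := by
    rw [hK2]
    have h2 : ‖(2 : ℂ) • (1 : H →L[ℂ] H)‖ ≤ 2 := by
      rw [norm_smul]
      simp only [Complex.norm_ofNat]
      nlinarith [hone]
    calc ‖(2 : ℂ) • (1 : H →L[ℂ] H)
          + (A1 * A0) * ((cc * cc) • (B0 * B1) - (ss * ss) • (B1 * B0))
          + (A0 * A1) * ((cc * cc) • (B1 * B0) - (ss * ss) • (B0 * B1))‖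
        ≤ ‖(2 : ℂ) • (1 : H →L[ℂ] H)
          + (A1 * A0) * ((cc * cc) • (B0 * B1) - (ss * ss) • (B1 * B0))‖
          + ‖(A0 * A1) * ((cc * cc) • (B1 * B0) - (ss * ss) • (B0 * B1))‖ := norm_add_le _ _
      _ ≤ ‖(2 : ℂ) • (1 : H →L[ℂ] H)‖
          + ‖(A1 * A0) * ((cc * cc) • (B0 * B1) - (ss * ss) • (B1 * B0))‖
          + ‖(A0 * A1) * ((cc * cc) • (B1 * B0) - (ss * ss) • (B0 * B1))‖ := by
            linarith [norm_add_le ((2 : ℂ) • (1 : H →L[ℂ] H))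
              ((A1 * A0) * ((cc * cc) • (B0 * B1) - (ss * ss) • (B1 * B0)))]
      _ ≤ 4 := by linarith
  -- K is self-adjoint
  have hKsa : star K = K := by
    rw [hK]
    simp only [star_sub, star_add, star_smul, star_mul, hA0.star_eq, hA1.star_eq,
      hB0.star_eq, hB1.star_eq, hcc, hss, Complex.star_def, Complex.conj_ofReal]
    rw [← hc00.eq, ← hc01.eq, ← hc10.eq, ← hc11.eq]
  have hKnorm : ‖K‖ ≤ 2 := by
    have h := CStarRing.norm_star_mul_self (x := K)
    rw [hKsa] at h
    nlinarith [norm_nonneg K, hKK]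
  -- conclude
  have hnormJ : Real.cos θ * ‖J‖ = ‖K‖ := by
    rw [← hcJ, norm_smul, hcc, Complex.norm_real, Real.norm_eq_abs, abs_of_pos hcpos]
  rw [le_div_iff₀ hcpos]
  nlinarith [hKnorm]
end

section
/- Let {N_{β0β1}}_{β0,β1∈{0,1}} be a POVM on ℂ² (i.e., each N_{β0β1} is positive semidefinite and they sum to the identity), and define B0 = N_{00} + N_{01} − N_{10} − N_{11} and B1 = N_{00} − N_{01} + N_{10} − N_{11}. Then (1/2)·[Tr(X·B1) + Tr(Z·B0)] ≤ √2. -/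
open Matrix ComplexOrder

/-! Grouped by outcome, `Tr(X B₁) + Tr(Z B₀) = ∑ Tr((±X ± Z) N_{β₀β₁})`. Since `X` and `Z` are
anticommuting Hermitian involutions, each `±X ± Z` is Hermitian with square `2`, hence lies below
`√2` in the Loewner order. So each term is at most `√2 Tr N_{β₀β₁}`, and these traces add up to
`Tr 1 = 2`. -/

namespace Matrix

variable {n 𝕜 : Type*} [Fintype n] [RCLike 𝕜]

theorem PosSemidef.trace_mul_nonneg {A B : Matrix n n 𝕜} (hA : A.PosSemidef)
    (hB : B.PosSemidef) : 0 ≤ (A * B).trace := by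
  classical
  obtain ⟨C, rfl⟩ : ∃ C : Matrix n n 𝕜, A = Cᴴ * C := by
    open scoped MatrixOrder Matrix.Norms.L2Operator in
    exact CStarAlgebra.nonneg_iff_eq_star_mul_self.mp hA.nonneg
  rw [Matrix.mul_assoc, trace_mul_comm]
  exact (hB.mul_mul_conjTranspose_same C).trace_nonneg

variable [DecidableEq n]

-- `(c - M)² = 2c (c - M)`, so `c - M` is a positive multiple of `(c - M)ᴴ (c - M)`.
theorem IsHermitian.posSemidef_smul_one_sub {M : Matrix n n 𝕜} (hM : M.IsHermitian) {c : ℝ}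
    (hc : 0 < c) (hM2 : M * M = ((c : 𝕜) ^ 2) • 1) : ((c : 𝕜) • 1 - M).PosSemidef := by
  set A := (c : 𝕜) • 1 - M
  have hAA : Aᴴ * A = ((2 * c : ℝ) : 𝕜) • A := by
    simp only [A, conjTranspose_sub, conjTranspose_smul, conjTranspose_one, hM.eq,
      RCLike.star_def, RCLike.conj_ofReal, sub_mul, mul_sub, Matrix.smul_mul, Matrix.mul_smul,
      one_mul, mul_one, hM2]
    push_cast
    module
  have hA : A = (((2 * c)⁻¹ : ℝ) : 𝕜) • (Aᴴ * A) := by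
    rw [hAA, smul_smul, ← RCLike.ofReal_mul, inv_mul_cancel₀ (by positivity),
      RCLike.ofReal_one, one_smul]
  rw [hA]
  exact (posSemidef_conjTranspose_mul_self A).smul (RCLike.ofReal_nonneg.mpr (by positivity))

theorem IsHermitian.re_trace_mul_le {M N : Matrix n n 𝕜} (hM : M.IsHermitian) {c : ℝ}
    (hc : 0 < c) (hM2 : M * M = ((c : 𝕜) ^ 2) • 1) (hN : N.PosSemidef) :
    RCLike.re (M * N).trace ≤ c * RCLike.re N.trace := by
  have h := RCLike.nonneg_iff.mp ((hM.posSemidef_smul_one_sub hc hM2).trace_mul_nonneg hN) |>.1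
  simpa [sub_mul, trace_sub, trace_smul, RCLike.smul_re] using h

theorem re_trace_add_mul_le_sqrt_two {X Z N : Matrix n n 𝕜} (hX : X.IsHermitian)
    (hZ : Z.IsHermitian) (hXX : X * X = 1) (hZZ : Z * Z = 1) (hXZ : X * Z + Z * X = 0)
    (hN : N.PosSemidef) :
    RCLike.re ((X + Z) * N).trace ≤ √2 * RCLike.re N.trace := by
  refine (hX.add hZ).re_trace_mul_le (by positivity) ?_ hN
  rw [show (X + Z) * (X + Z) = X * X + Z * Z + (X * Z + Z * X) by noncomm_ring, hXX, hZZ, hXZ,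
    add_zero, ← RCLike.ofReal_pow, Real.sq_sqrt zero_le_two, RCLike.ofReal_ofNat, two_smul]

theorem re_trace_mul_marginals_le_sqrt_two {X Z : Matrix n n 𝕜} (hX : X.IsHermitian) (hZ : Z.IsHermitian)
    (hXX : X * X = 1) (hZZ : Z * Z = 1) (hXZ : X * Z + Z * X = 0) {N : Fin 2 → Fin 2 → Matrix n n 𝕜}
    (hN : ∀ i j, (N i j).PosSemidef) :
    RCLike.re ((X * (N 0 0 - N 0 1 + N 1 0 - N 1 1)).trace +
        (Z * (N 0 0 + N 0 1 - N 1 0 - N 1 1)).trace) ≤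
      √2 * RCLike.re (N 0 0 + N 0 1 + N 1 0 + N 1 1).trace := by
  have h00 := re_trace_add_mul_le_sqrt_two hX hZ hXX hZZ hXZ (hN 0 0)
  have h01 := re_trace_add_mul_le_sqrt_two hX.neg hZ (by simpa) hZZ (by simp [← neg_add, hXZ])
    (hN 0 1)
  have h10 := re_trace_add_mul_le_sqrt_two hX hZ.neg hXX (by simpa) (by simp [← neg_add, hXZ])
    (hN 1 0)
  have h11 := re_trace_add_mul_le_sqrt_two hX.neg hZ.neg (by simpa) (by simpa) (by simpa)
    (hN 1 1)
  have hsplit : (X * (N 0 0 - N 0 1 + N 1 0 - N 1 1)).trace +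
        (Z * (N 0 0 + N 0 1 - N 1 0 - N 1 1)).trace =
      ((X + Z) * N 0 0).trace + ((-X + Z) * N 0 1).trace +
        ((X + -Z) * N 1 0).trace + ((-X + -Z) * N 1 1).trace := by
    simp only [mul_add, mul_sub, add_mul, neg_mul, trace_add, trace_sub, trace_neg]
    ring
  simp only [hsplit, trace_add, map_add]
  linear_combination h00 + h01 + h10 + h11

end Matrix

/-- Joint-measurability inequality: if `B0`, `B1` are marginals of a four-outcome
POVM on ℂ², then `(1/2)[Tr(X·B1) + Tr(Z·B0)] ≤ √2`. -/
theorem stmt3 (N : Fin 2 → Fin 2 → Matrix (Fin 2) (Fin 2) ℂ)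
    (hpos : ∀ i j, (N i j).PosSemidef)
    (hsum : N 0 0 + N 0 1 + N 1 0 + N 1 1 = 1) :
    (1 / 2 : ℝ) *
      (((!![0, 1; 1, 0] : Matrix (Fin 2) (Fin 2) ℂ) *
          (N 0 0 - N 0 1 + N 1 0 - N 1 1)).trace +
       ((!![1, 0; 0, -1] : Matrix (Fin 2) (Fin 2) ℂ) *
          (N 0 0 + N 0 1 - N 1 0 - N 1 1)).trace).re
      ≤ Real.sqrt 2 := by
  set X : Matrix (Fin 2) (Fin 2) ℂ := !![0, 1; 1, 0]
  set Z : Matrix (Fin 2) (Fin 2) ℂ := !![1, 0; 0, -1]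
  have hX : X.IsHermitian := by ext i j; fin_cases i <;> fin_cases j <;> simp [X]
  have hZ : Z.IsHermitian := by ext i j; fin_cases i <;> fin_cases j <;> simp [Z]
  have hXX : X * X = 1 := by simp [X, one_fin_two]
  have hZZ : Z * Z = 1 := by simp [Z, one_fin_two]
  have hXZ : X * Z + Z * X = 0 := by ext i j; fin_cases i <;> fin_cases j <;> simp [X, Z]
  have h := re_trace_mul_marginals_le_sqrt_two hX hZ hXX hZZ hXZ hpos
  rw [hsum, trace_one, Fintype.card_fin] at h
  norm_num at h ⊢
  linarith
end

section
/- There exist two-outcome qubit observables with B0 = B1 = (Z + X)/√2 that are jointly measurable (arise as marginals of a single POVM) and achieve equality (1/2)[Tr(X·B1) + Tr(Z·B0)] = √2, so the joint-measurability bound √2 is tight. -/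
/-!
`B = (Z + X)/√2` is a Hermitian involution, so its spectral projections `(1 ± B)/2` are
positive semidefinite; putting them on the outcomes `(0,0)` and `(1,1)` of a four-outcome POVM
gives both marginals equal to `B`. Since `(Z + X)² = 2`,
`Tr(X B) + Tr(Z B) = Tr((Z + X)²)/√2 = 2√2`.
-/

open Matrix ComplexOrder

namespace Matrix

variable {n R 𝕜 : Type*} [Fintype n]

lemma PosSemidef.of_isHermitian_of_isIdempotentElem [CommRing R] [PartialOrder R] [StarRing R]
    [StarOrderedRing R] {P : Matrix n n R} (hP : P.IsHermitian) (hPP : IsIdempotentElem P) :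
    P.PosSemidef := by
  have hP' : P = P * Pᴴ := by rw [hP.eq, hPP.eq]
  rw [hP']
  exact posSemidef_self_mul_conjTranspose P

variable [DecidableEq n]

lemma posSemidef_half_smul_one_add [RCLike 𝕜] {B : Matrix n n 𝕜} (hB : B.IsHermitian)
    (hBB : B * B = 1) : ((2 : 𝕜)⁻¹ • (1 + B)).PosSemidef := by
  refine .of_isHermitian_of_isIdempotentElem ?_ ?_
  · exact (isHermitian_one.add hB).smul (by simp [IsSelfAdjoint])
  · rw [IsIdempotentElem, smul_mul_smul_comm, add_mul, mul_add, mul_add, hBB]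
    simp only [one_mul, mul_one]
    module

end Matrix

section JointMeasurability

variable {n R 𝕜 : Type*}

-- Witness: `Mp` and `Mm` on the outcomes `(0,0)` and `(1,1)`, zero on the other two.
lemma exists_povm_marginals_eq_sub [CommRing R] [PartialOrder R] [StarRing R] [DecidableEq n]
    {Mp Mm : Matrix n n R} (hp : Mp.PosSemidef) (hm : Mm.PosSemidef) (hsum : Mp + Mm = 1) :
    ∃ N : Fin 2 → Fin 2 → Matrix n n R,
      (∀ i j, (N i j).PosSemidef) ∧
      N 0 0 + N 0 1 + N 1 0 + N 1 1 = 1 ∧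
      N 0 0 + N 0 1 - N 1 0 - N 1 1 = Mp - Mm ∧
      N 0 0 - N 0 1 + N 1 0 - N 1 1 = Mp - Mm := by
  refine ⟨![![Mp, 0], ![0, Mm]], ?_, ?_, ?_, ?_⟩
  · intro i j
    fin_cases i <;> fin_cases j <;> simp [hp, hm, PosSemidef.zero]
  all_goals simp [hsum]

lemma exists_povm_marginals_eq_of_mul_self_eq_one [RCLike 𝕜] [Fintype n] [DecidableEq n]
    {B : Matrix n n 𝕜} (hB : B.IsHermitian) (hBB : B * B = 1) :
    ∃ N : Fin 2 → Fin 2 → Matrix n n 𝕜,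
      (∀ i j, (N i j).PosSemidef) ∧
      N 0 0 + N 0 1 + N 1 0 + N 1 1 = 1 ∧
      N 0 0 + N 0 1 - N 1 0 - N 1 1 = B ∧
      N 0 0 - N 0 1 + N 1 0 - N 1 1 = B := by
  have hneg : (-B) * (-B) = 1 := by rw [neg_mul_neg, hBB]
  have hdiff : (2 : 𝕜)⁻¹ • (1 + B) - (2 : 𝕜)⁻¹ • (1 + -B) = B := by module
  simpa only [hdiff] using exists_povm_marginals_eq_sub (posSemidef_half_smul_one_add hB hBB)
    (posSemidef_half_smul_one_add hB.neg hneg) (by module)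

end JointMeasurability

def pauliX : Matrix (Fin 2) (Fin 2) ℂ := !![0, 1; 1, 0]

def pauliZ : Matrix (Fin 2) (Fin 2) ℂ := !![1, 0; 0, -1]

lemma pauliZ_add_pauliX_mul_self : (pauliZ + pauliX) * (pauliZ + pauliX) = (2 : ℂ) • 1 := by
  ext i j
  fin_cases i <;> fin_cases j <;> simp [pauliZ, pauliX, Matrix.mul_apply] <;> norm_num

lemma isHermitian_pauliZ_add_pauliX : (pauliZ + pauliX).IsHermitian := by
  ext i j
  fin_cases i <;> fin_cases j <;> simp [pauliZ, pauliX]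

lemma trace_pauliZ_add_pauliX_mul_self : ((pauliZ + pauliX) * (pauliZ + pauliX)).trace = 4 := by
  rw [pauliZ_add_pauliX_mul_self, trace_smul, trace_one]
  norm_num

noncomputable def hadamardGate : Matrix (Fin 2) (Fin 2) ℂ :=
  ((Real.sqrt 2 : ℂ))⁻¹ • (pauliZ + pauliX)

lemma isHermitian_hadamardGate : hadamardGate.IsHermitian :=
  isHermitian_pauliZ_add_pauliX.smul (by simp [IsSelfAdjoint])

lemma hadamardGate_mul_self : hadamardGate * hadamardGate = 1 := by
  have hsq : ((Real.sqrt 2 : ℂ))⁻¹ * ((Real.sqrt 2 : ℂ))⁻¹ * 2 = 1 := by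
    rw [← mul_inv, ← Complex.ofReal_mul, Real.mul_self_sqrt zero_le_two]
    norm_num
  rw [hadamardGate, smul_mul_smul_comm, pauliZ_add_pauliX_mul_self, smul_smul, hsq, one_smul]

lemma half_re_trace_pauli_mul_hadamardGate :
    (1 / 2 : ℝ) * ((pauliX * hadamardGate).trace
      + (pauliZ * hadamardGate).trace).re = Real.sqrt 2 := by
  have htr : (pauliX * hadamardGate).trace + (pauliZ * hadamardGate).trace
      = ((4 / Real.sqrt 2 : ℝ) : ℂ) := by
    rw [← trace_add, ← add_mul, add_comm, hadamardGate, mul_smul_comm, trace_smul,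
      trace_pauliZ_add_pauliX_mul_self]
    push_cast
    ring
  rw [htr, Complex.ofReal_re]
  field_simp
  rw [Real.sq_sqrt zero_le_two]
  norm_num

/-- Tightness of the joint-measurability bound `√2`: the choice
`B0 = B1 = (Z+X)/√2` is jointly measurable and achieves equality. -/
theorem stmt4 :
    ∃ N : Fin 2 → Fin 2 → Matrix (Fin 2) (Fin 2) ℂ,
      (∀ i j, (N i j).PosSemidef) ∧
      N 0 0 + N 0 1 + N 1 0 + N 1 1 = 1 ∧
      N 0 0 + N 0 1 - N 1 0 - N 1 1 =
        ((Real.sqrt 2 : ℂ))⁻¹ •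
          ((!![1, 0; 0, -1] : Matrix (Fin 2) (Fin 2) ℂ) + !![0, 1; 1, 0]) ∧
      N 0 0 - N 0 1 + N 1 0 - N 1 1 =
        ((Real.sqrt 2 : ℂ))⁻¹ •
          ((!![1, 0; 0, -1] : Matrix (Fin 2) (Fin 2) ℂ) + !![0, 1; 1, 0]) ∧
      (1 / 2 : ℝ) *
        (((!![0, 1; 1, 0] : Matrix (Fin 2) (Fin 2) ℂ) *
            (N 0 0 - N 0 1 + N 1 0 - N 1 1)).trace +
         ((!![1, 0; 0, -1] : Matrix (Fin 2) (Fin 2) ℂ) *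
            (N 0 0 + N 0 1 - N 1 0 - N 1 1)).trace).re
        = Real.sqrt 2 := by
  obtain ⟨N, hpsd, hsum, hB0, hB1⟩ :=
    exists_povm_marginals_eq_of_mul_self_eq_one isHermitian_hadamardGate hadamardGate_mul_self
  refine ⟨N, hpsd, hsum, hB0, hB1, ?_⟩
  rw [hB0, hB1]
  exact half_re_trace_pauli_mul_hadamardGate
end

section
/- In the (C, J)-plane, the convex region {(C, J) : 2 ≤ C ≤ 2√2, J ≤ (C + √(8 − C²))/2} is exactly the set of points with 2 ≤ C ≤ 2√2 satisfying sin(u)·C + (cos(u) − sin(u))·J ≤ 2 for all u ∈ [0, π/4]. That is, the nonlinear bound J ≤ (C + √(8 − C²))/2 is equivalent to the family of linear bounds indexed by u. -/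
open Real Filter

set_option maxHeartbeats 1600000 in
/-- The nonlinear bound `J ≤ (C + √(8 − C²))/2` on `[2, 2√2]` is equivalent to the
family of linear bounds `sin u·C + (cos u − sin u)·J ≤ 2`, `u ∈ [0, π/4]`. -/
theorem stmt5 (C J : ℝ) :
    (2 ≤ C ∧ C ≤ 2 * Real.sqrt 2 ∧ J ≤ (C + Real.sqrt (8 - C ^ 2)) / 2) ↔
    (2 ≤ C ∧ C ≤ 2 * Real.sqrt 2 ∧
      ∀ u ∈ Set.Icc (0 : ℝ) (π / 4),
        Real.sin u * C + (Real.cos u - Real.sin u) * J ≤ 2) := by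
  have h2 : Real.sqrt 2 ^ 2 = 2 := Real.sq_sqrt (by norm_num)
  have hs2pos : (0:ℝ) < Real.sqrt 2 := Real.sqrt_pos.2 (by norm_num)
  constructor
  · rintro ⟨hC1, hC2, hJ⟩
    refine ⟨hC1, hC2, fun u ⟨hu0, hu1⟩ => ?_⟩
    have hC8 : C ^ 2 ≤ 8 := by nlinarith
    set s := Real.sqrt (8 - C ^ 2) with hs
    have hs0 : 0 ≤ s := Real.sqrt_nonneg _
    have hsq : s ^ 2 = 8 - C ^ 2 := Real.sq_sqrt (by linarith)
    have hsin0 : 0 ≤ Real.sin u := Real.sin_nonneg_of_nonneg_of_le_pi hu0 (by linarith [pi_pos])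
    have hb : 0 ≤ Real.cos u - Real.sin u := by
      have h1 : Real.cos (u + π/4) = (Real.cos u - Real.sin u) * (Real.sqrt 2 / 2) := by
        rw [Real.cos_add, Real.cos_pi_div_four, Real.sin_pi_div_four]; ring
      have h3 : 0 ≤ Real.cos (u + π/4) := by
        apply Real.cos_nonneg_of_mem_Icc
        constructor <;> [linarith [pi_pos]; linarith]
      nlinarith
    have hpyth := Real.sin_sq_add_cos_sq u
    have key : Real.sin u * C + (Real.cos u - Real.sin u) * ((C + s)/2) ≤ 2 := by
      nlinarith [sq_nonneg ((Real.sin u + Real.cos u) * s - (Real.cos u - Real.sin u) * C),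
        mul_nonneg hsin0 (by linarith : (0:ℝ) ≤ C), mul_nonneg hb hs0,
        mul_nonneg hb (by linarith : (0:ℝ) ≤ C)]
    nlinarith [mul_le_mul_of_nonneg_left hJ hb]
  · rintro ⟨hC1, hC2, hlin⟩
    refine ⟨hC1, hC2, ?_⟩
    have hC8 : C ^ 2 ≤ 8 := by nlinarith
    set s := Real.sqrt (8 - C ^ 2) with hs
    have hs0 : 0 ≤ s := Real.sqrt_nonneg _
    have hsq : s ^ 2 = 8 - C ^ 2 := Real.sq_sqrt (by linarith)
    have hpi4 : (0:ℝ) < π / 4 := by linarith [pi_pos]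
    rcases lt_or_eq_of_le hs0 with hspos | hszero
    · -- s > 0 : use u = π/4 - arccos (C / (2√2))
      set x := C / (2 * Real.sqrt 2) with hx
      have hxle : x ≤ 1 := by
        rw [hx, div_le_one (by positivity)]; exact hC2
      have hxge : Real.sqrt 2 / 2 ≤ x := by
        rw [hx, le_div_iff₀ (by positivity)]
        nlinarith
      have hxm1 : -1 ≤ x := by nlinarith
      set v := Real.arccos x with hv
      have hv0 : 0 ≤ v := Real.arccos_nonneg x
      have hv4 : v ≤ π / 4 := Real.arccos_le_pi_div_four.2 hxge
      have hcosv : Real.cos v = C / (2 * Real.sqrt 2) := Real.cos_arccos hxm1 hxle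
      have hsinv : Real.sin v = s / (2 * Real.sqrt 2) := by
        rw [hv, Real.sin_arccos]
        rw [show 1 - x ^ 2 = (s / (2 * Real.sqrt 2)) ^ 2 by
          rw [hx, div_pow, div_pow, mul_pow, h2]; rw [hsq]; ring]
        exact Real.sqrt_sq (by positivity)
      have hu := hlin (π/4 - v) ⟨by linarith, by linarith⟩
      rw [Real.sin_sub, Real.cos_sub, Real.sin_pi_div_four, Real.cos_pi_div_four,
        hcosv, hsinv] at hu
      have hne : Real.sqrt 2 ≠ 0 := ne_of_gt hs2pos
      have e1 : Real.sqrt 2 / 2 * (C / (2 * Real.sqrt 2)) - Real.sqrt 2 / 2 * (s / (2 * Real.sqrt 2)) = (C - s)/4 := by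
        field_simp
        ring
      have e2 : Real.sqrt 2 / 2 * (C / (2 * Real.sqrt 2)) + Real.sqrt 2 / 2 * (s / (2 * Real.sqrt 2)) = (C + s)/4 := by
        field_simp
        ring
      rw [e1, e2] at hu
      nlinarith [mul_pos hspos hspos]
    · -- s = 0 : C = 2√2, need J ≤ √2 via limit
      have hs' : s = 0 := hszero.symm
      have hCsq : C ^ 2 = 8 := by nlinarith
      have hCval : C = 2 * Real.sqrt 2 := by nlinarith
      have hbound : ∀ v ∈ Set.Ioo (0:ℝ) (π/4),
          J ≤ Real.sqrt 2 * (Real.sin v / (1 + Real.cos v)) + Real.sqrt 2 := by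
        intro v ⟨hv0, hv4⟩
        have hu := hlin (π/4 - v) ⟨by linarith, by linarith⟩
        rw [Real.sin_sub, Real.cos_sub, Real.sin_pi_div_four, Real.cos_pi_div_four, hCval] at hu
        have hsinv : 0 < Real.sin v := Real.sin_pos_of_pos_of_lt_pi hv0 (by linarith [pi_pos])
        have hcosv : 0 < Real.cos v := Real.cos_pos_of_mem_Ioo ⟨by linarith [pi_pos], by linarith [pi_pos]⟩
        have h1c : (0:ℝ) < 1 + Real.cos v := by linarith
        have hpyth := Real.sin_sq_add_cos_sq v
        -- turn hu into a clean linear inequality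
        rw [show (Real.sqrt 2 / 2 * Real.cos v - Real.sqrt 2 / 2 * Real.sin v) * (2 * Real.sqrt 2)
              + (Real.sqrt 2 / 2 * Real.cos v + Real.sqrt 2 / 2 * Real.sin v
                 - (Real.sqrt 2 / 2 * Real.cos v - Real.sqrt 2 / 2 * Real.sin v)) * J
            = 2 * Real.cos v - 2 * Real.sin v + Real.sqrt 2 * Real.sin v * J from by
          linear_combination (Real.cos v - Real.sin v) * h2] at hu
        have e4 : Real.sqrt 2 * Real.sin v * (Real.sqrt 2 * Real.sin v + Real.sqrt 2 * (1 + Real.cos v))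
            = (2 - 2 * Real.cos v + 2 * Real.sin v) * (1 + Real.cos v) := by
          linear_combination (Real.sin v ^ 2 + Real.sin v * (1 + Real.cos v)) * h2 + 2 * hpyth
        have h3 := mul_le_mul_of_nonneg_right hu h1c.le
        have key : Real.sqrt 2 * Real.sin v * (J * (1 + Real.cos v))
            ≤ Real.sqrt 2 * Real.sin v * (Real.sqrt 2 * Real.sin v + Real.sqrt 2 * (1 + Real.cos v)) := by
          rw [e4]; nlinarith [h3]
        have hmul : J * (1 + Real.cos v) ≤ Real.sqrt 2 * Real.sin v + Real.sqrt 2 * (1 + Real.cos v) :=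
          le_of_mul_le_mul_left key (mul_pos hs2pos hsinv)
        calc J ≤ (Real.sqrt 2 * Real.sin v + Real.sqrt 2 * (1 + Real.cos v)) / (1 + Real.cos v) :=
              (le_div_iff₀ h1c).2 hmul
          _ = Real.sqrt 2 * (Real.sin v / (1 + Real.cos v)) + Real.sqrt 2 := by
              field_simp
      have hcont : ContinuousAt (fun v : ℝ => Real.sqrt 2 * (Real.sin v / (1 + Real.cos v)) + Real.sqrt 2) 0 := by
        apply ContinuousAt.add _ continuousAt_const
        apply ContinuousAt.mul continuousAt_const
        exact ContinuousAt.div Real.continuous_sin.continuousAt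
          (continuous_const.add Real.continuous_cos).continuousAt (by norm_num)
      have htend : Tendsto (fun v : ℝ => Real.sqrt 2 * (Real.sin v / (1 + Real.cos v)) + Real.sqrt 2)
          (nhdsWithin 0 (Set.Ioi 0)) (nhds (Real.sqrt 2)) := by
        have := hcont.tendsto.mono_left (nhdsWithin_le_nhds (s := Set.Ioi (0:ℝ)))
        simpa using this
      have hJle : J ≤ Real.sqrt 2 := by
        refine ge_of_tendsto htend ?_
        filter_upwards [Ioo_mem_nhdsGT_of_mem ⟨le_refl 0, hpi4⟩] with v hv
        exact hbound v hv
      rw [hCval, hs']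
      linarith
end

section
/- Let A0, A1, B0S, B1S, B0L, B1L be self-adjoint operators squaring to the identity with [A_x, B_{yz}] = 0 and [B_{0L}, B_{1L}] = 0. For u ∈ [0, π/4), write c = cos u, s = sin u and define C_{ijS} = Σ_{x,y} (−1)^{δ_{x,i}δ_{y,j}} A_x B_{yS}, J_{ijL} = A0 B_{(0⊕i)L} + (−1)^{j+1} A1 B_{(1⊕i)L}, and the polynomials P1 = −c(c−s)C_{11S} + (c²−s²)J_{11L}, P2 = −c(c+s)C_{01S} + (c²−s²)J_{01L}, P3 = s(c+s)C_{10S} + (c²−s²)J_{10L}, P4 = s(c−s)C_{00S} + (c²−s²)J_{00L}, and I_u = 2·1 − s·C_{11S} − (c−s)·J_{11L}. Then the algebraic identity I_u = (1/4)I_u² + s·P1²/(8c(c²−s²)) + s·P2²/(8c(c+s)²) + P3²/(8(c+s)²) + P4²/(8(c²−s²)) holds. -/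
/-!
Cleared of the denominator `8c(c+s)²(c²-s²)`, the identity is polynomial. Because the `A`s
commute with the `B`s, each square of a correlator expands into words `A_x A_x' B B'`, which the
relations `A_x² = B² = 1` and `B₀L B₁L = B₁L B₀L` bring to a normal form; both sides then agree
word by word, the constant term using `c² + s² = 1`. For `u ∈ [0, π/4)` one has `0 ≤ s < c`, so
the denominator does not vanish.
-/

open Real

theorem sin_lt_cos_of_nonneg_of_lt_pi_div_four {u : ℝ} (h0 : 0 ≤ u) (h : u < π / 4) :
    sin u < cos u :=
  calc sin u < sin (π / 4) :=
        sin_lt_sin_of_lt_of_le_pi_div_two (by linarith [pi_pos]) (by linarith [pi_pos]) h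
    _ = cos (π / 4) := by rw [sin_pi_div_four, cos_pi_div_four]
    _ ≤ cos u := cos_le_cos_of_nonneg_of_le_pi h0 (by linarith [pi_pos]) h.le

theorem mul_mul_cancel_left_of_mul_self_eq_one {M : Type*} [Monoid M] {a : M} (h : a * a = 1)
    (b : M) : a * (a * b) = b := by
  rw [← mul_assoc, h, one_mul]

set_option maxHeartbeats 400000 in
theorem sos_identity_mul_denom {R A : Type*} [CommRing R] [Ring A] [Algebra R A]
    {A0 A1 B0S B1S B0L B1L : A}
    (hA0sq : A0 * A0 = 1) (hA1sq : A1 * A1 = 1)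
    (hB0Ssq : B0S * B0S = 1) (hB1Ssq : B1S * B1S = 1)
    (hB0Lsq : B0L * B0L = 1) (hB1Lsq : B1L * B1L = 1)
    (hc00S : Commute A0 B0S) (hc01S : Commute A0 B1S)
    (hc10S : Commute A1 B0S) (hc11S : Commute A1 B1S)
    (hc00L : Commute A0 B0L) (hc01L : Commute A0 B1L)
    (hc10L : Commute A1 B0L) (hc11L : Commute A1 B1L)
    (hBL : Commute B0L B1L)
    {c s : R} (hcs : c ^ 2 + s ^ 2 = 1)
    {C11S C01S C10S C00S J11L J01L J10L J00L Iu P1 P2 P3 P4 : A}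
    (hC11S : C11S = A0 * B0S + A0 * B1S + A1 * B0S - A1 * B1S)
    (hC01S : C01S = A0 * B0S - A0 * B1S + A1 * B0S + A1 * B1S)
    (hC10S : C10S = A0 * B0S + A0 * B1S - A1 * B0S + A1 * B1S)
    (hC00S : C00S = -(A0 * B0S) + A0 * B1S + A1 * B0S + A1 * B1S)
    (hJ11L : J11L = A0 * B1L + A1 * B0L)
    (hJ01L : J01L = A0 * B0L + A1 * B1L)
    (hJ10L : J10L = A0 * B1L - A1 * B0L)
    (hJ00L : J00L = A0 * B0L - A1 * B1L)
    (hP1 : P1 = (-(c * (c - s))) • C11S + (c ^ 2 - s ^ 2) • J11L)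
    (hP2 : P2 = (-(c * (c + s))) • C01S + (c ^ 2 - s ^ 2) • J01L)
    (hP3 : P3 = (s * (c + s)) • C10S + (c ^ 2 - s ^ 2) • J10L)
    (hP4 : P4 = (s * (c - s)) • C00S + (c ^ 2 - s ^ 2) • J00L)
    (hIu : Iu = (2 : A) - s • C11S - (c - s) • J11L) :
    (8 * c * (c + s) ^ 2 * (c ^ 2 - s ^ 2)) • Iu =
      (2 * c * (c + s) ^ 2 * (c ^ 2 - s ^ 2)) • Iu ^ 2 +
      (s * (c + s) ^ 2) • P1 ^ 2 + (s * (c ^ 2 - s ^ 2)) • P2 ^ 2 +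
      (c * (c ^ 2 - s ^ 2)) • P3 ^ 2 + (c * (c + s) ^ 2) • P4 ^ 2 := by
  subst hIu hP1 hP2 hP3 hP4 hC11S hC01S hC10S hC00S hJ11L hJ01L hJ10L hJ00L
  rw [show (2 : A) = (2 : R) • 1 by rw [two_smul, one_add_one_eq_two]]
  simp only [sq, mul_add, add_mul, mul_sub, sub_mul, smul_add, smul_sub, smul_smul,
    smul_mul_assoc, mul_smul_comm, mul_assoc, mul_one, one_mul, mul_neg, neg_mul,
    hA0sq, hA1sq, hB0Ssq, hB1Ssq, hB0Lsq, hB1Lsq,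
    mul_mul_cancel_left_of_mul_self_eq_one hA0sq, mul_mul_cancel_left_of_mul_self_eq_one hA1sq,
    hc00S.symm.left_comm, hc01S.symm.left_comm, hc10S.symm.left_comm, hc11S.symm.left_comm,
    hc00L.symm.left_comm, hc01L.symm.left_comm, hc10L.symm.left_comm, hc11L.symm.left_comm,
    hBL.symm.eq]
  match_scalars
  · linear_combination (-8 * c * (c + s) ^ 2 * (c ^ 2 - s ^ 2)) * hcs
  all_goals ring

/-- The sum-of-squares identity certifying the SRQ bound
`sin u·C_S + (cos u − sin u)·J_L ≤ 2` for `u ∈ [0, π/4)`. -/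
theorem stmt7 {A : Type*} [Ring A] [Algebra ℝ A]
    (A0 A1 B0S B1S B0L B1L : A)
    (hA0sq : A0 * A0 = 1) (hA1sq : A1 * A1 = 1)
    (hB0Ssq : B0S * B0S = 1) (hB1Ssq : B1S * B1S = 1)
    (hB0Lsq : B0L * B0L = 1) (hB1Lsq : B1L * B1L = 1)
    (hc00S : Commute A0 B0S) (hc01S : Commute A0 B1S)
    (hc10S : Commute A1 B0S) (hc11S : Commute A1 B1S)
    (hc00L : Commute A0 B0L) (hc01L : Commute A0 B1L)
    (hc10L : Commute A1 B0L) (hc11L : Commute A1 B1L)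
    (hBL : Commute B0L B1L)
    (u : ℝ) (hu : u ∈ Set.Ico 0 (π / 4))
    (c s : ℝ) (hc : c = Real.cos u) (hs : s = Real.sin u)
    (C11S C01S C10S C00S J11L J01L J10L J00L Iu P1 P2 P3 P4 : A)
    (hC11S : C11S = A0 * B0S + A0 * B1S + A1 * B0S - A1 * B1S)
    (hC01S : C01S = A0 * B0S - A0 * B1S + A1 * B0S + A1 * B1S)
    (hC10S : C10S = A0 * B0S + A0 * B1S - A1 * B0S + A1 * B1S)
    (hC00S : C00S = -(A0 * B0S) + A0 * B1S + A1 * B0S + A1 * B1S)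
    (hJ11L : J11L = A0 * B1L + A1 * B0L)
    (hJ01L : J01L = A0 * B0L + A1 * B1L)
    (hJ10L : J10L = A0 * B1L - A1 * B0L)
    (hJ00L : J00L = A0 * B0L - A1 * B1L)
    (hP1 : P1 = (-(c * (c - s))) • C11S + (c ^ 2 - s ^ 2) • J11L)
    (hP2 : P2 = (-(c * (c + s))) • C01S + (c ^ 2 - s ^ 2) • J01L)
    (hP3 : P3 = (s * (c + s)) • C10S + (c ^ 2 - s ^ 2) • J10L)
    (hP4 : P4 = (s * (c - s)) • C00S + (c ^ 2 - s ^ 2) • J00L)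
    (hIu : Iu = (2 : A) - s • C11S - (c - s) • J11L) :
    Iu = (1 / 4 : ℝ) • Iu ^ 2 +
      (s / (8 * c * (c ^ 2 - s ^ 2))) • P1 ^ 2 +
      (s / (8 * c * (c + s) ^ 2)) • P2 ^ 2 +
      (1 / (8 * (c + s) ^ 2)) • P3 ^ 2 +
      (1 / (8 * (c ^ 2 - s ^ 2))) • P4 ^ 2 := by
  have hs0 : 0 ≤ s := hs ▸ sin_nonneg_of_nonneg_of_le_pi hu.1 (by linarith [hu.2, pi_pos])
  have hsc : s < c := hc ▸ hs ▸ sin_lt_cos_of_nonneg_of_lt_pi_div_four hu.1 hu.2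
  have hc0 : c ≠ 0 := by linarith
  have hcs0 : c + s ≠ 0 := by linarith
  have hq : c ^ 2 - s ^ 2 ≠ 0 := by nlinarith
  have hD : 8 * c * (c + s) ^ 2 * (c ^ 2 - s ^ 2) ≠ 0 := by positivity
  have key := sos_identity_mul_denom hA0sq hA1sq hB0Ssq hB1Ssq hB0Lsq hB1Lsq hc00S hc01S hc10S
    hc11S hc00L hc01L hc10L hc11L hBL (by rw [hc, hs, cos_sq_add_sin_sq]) hC11S hC01S hC10S
    hC00S hJ11L hJ01L hJ10L hJ00L hP1 hP2 hP3 hP4 hIu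
  refine ((eq_inv_smul_iff₀ hD).2 key).trans ?_
  simp only [smul_add, smul_smul]
  match_scalars <;> field_simp
  norm_num
end

section
/- Fix ideal correlations p(a,b|x,y,z) with marginals p(a|x) and p(b|y,z), numbers of inputs m_A for Alice and m_B for the long-path device, and parameters s, t ∈ [0,1]. Consider the mixture of three strategies: (i) with weight s·t, a hidden variable (a′,x′) is drawn with probability p(a′|x′)/m_A, Alice outputs a′ if x = x′ and ∅ otherwise, and Bob outputs b with probability p(a′,b|x′,y,z)/p(a′|x′); (ii) with weight s·(1−t), Alice and the short-path device are ideal, and on the long path a random input y′ is chosen with probability 1/m_B and measured ideally, giving b′, with the remote device outputting b′ if y = y′ and ∅ otherwise; (iii) with weight 1−s, Alice and the remote device output ∅ and the short-path device outputs b with probability p(b|y,S). This mixture reproduces the lossy correlations p^η of Eq. (41) (no-click kept as an extra outcome) with η_{B_S} = 1 and remote efficiency η_L equal to the right-hand side of the universal bound; that is, the resulting joint distribution satisfies p^srq(a,b|x,y,L) = s(t/m_A + (1−t)/m_B)·p(a,b|x,y,L), p^srq(a,∅|x,y,L) = s(1−t)((m_B−1)/m_B)·p(a|x), p^srq(∅,b|x,y,L)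 = s·t((m_A−1)/m_A)·p(b|y,L), and p^srq(∅,∅|x,y,L) = 1−s. -/
open Finset

/-- Strategy (i): hidden variable `(a′,x′)` drawn with probability `pA a′ x′ / m_A`;
Alice outputs `a′` if `x = x′` and `∅` otherwise; Bob outputs `b` with probability
`r a′ x′ b y = p(b|a′,x′,y)`. -/
noncomputable def strat1 {dA dB mA mB : ℕ} (pA : Fin dA → Fin mA → ℝ)
    (r : Fin dA → Fin mA → Fin dB → Fin mB → ℝ)
    (oa : Option (Fin dA)) (ob : Option (Fin dB)) (x : Fin mA) (y : Fin mB) : ℝ :=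
  ∑ x' : Fin mA, ∑ a' : Fin dA,
    (pA a' x' / mA) *
      (if x = x' then (if oa = some a' then 1 else 0) else (if oa = none then 1 else 0)) *
      (match ob with | some b => r a' x' b y | none => 0)

/-- Strategy (ii): Alice ideal; on the long path a random input `y′` (probability `1/m_B`)
is measured ideally giving `b′`, and the remote device outputs `b′` if `y = y′`,
else `∅`. -/
noncomputable def strat2 {dA dB mA mB : ℕ} (p : Fin dA → Fin dB → Fin mA → Fin mB → ℝ)
    (pA : Fin dA → Fin mA → ℝ)
    (oa : Option (Fin dA)) (ob : Option (Fin dB)) (x : Fin mA) (y : Fin mB) : ℝ :=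
  (1 / mB) * ∑ y' : Fin mB,
    (if y' = y then
        (match oa, ob with | some a, some b => p a b x y | _, _ => 0)
      else
        (match oa, ob with | some a, none => pA a x | _, _ => 0))

/-- Strategy (iii): Alice and the remote device always output `∅`. -/
def strat3 {dA dB : ℕ} (oa : Option (Fin dA)) (ob : Option (Fin dB)) : ℝ :=
  if oa = none ∧ ob = none then 1 else 0

lemma strat1_ab {dA dB mA mB : ℕ} (pA : Fin dA → Fin mA → ℝ)
    (r : Fin dA → Fin mA → Fin dB → Fin mB → ℝ) (a : Fin dA) (b : Fin dB)
    (x : Fin mA) (y : Fin mB) :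
    strat1 pA r (some a) (some b) x y = pA a x / mA * r a x b y := by
  unfold strat1
  rw [Finset.sum_eq_single x]
  · rw [Finset.sum_eq_single a]
    · simp
    · intro a' _ ha'; simp [Ne.symm ha']
    · simp
  · intro x' _ hx'
    apply Finset.sum_eq_zero
    intro a' _
    simp [Ne.symm hx']
  · simp

lemma strat1_anone {dA dB mA mB : ℕ} (pA : Fin dA → Fin mA → ℝ)
    (r : Fin dA → Fin mA → Fin dB → Fin mB → ℝ) (oa : Option (Fin dA))
    (x : Fin mA) (y : Fin mB) :
    strat1 pA r oa none x y = 0 := by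
  unfold strat1
  apply Finset.sum_eq_zero; intro x' _
  apply Finset.sum_eq_zero; intro a' _
  simp

lemma strat1_noneb {dA dB mA mB : ℕ} (pA : Fin dA → Fin mA → ℝ)
    (r : Fin dA → Fin mA → Fin dB → Fin mB → ℝ) (b : Fin dB)
    (p : Fin dA → Fin dB → Fin mA → Fin mB → ℝ) (pB : Fin dB → Fin mB → ℝ)
    (hpB : ∀ b x y, ∑ a : Fin dA, p a b x y = pB b y)
    (hr : ∀ a b x y, p a b x y = pA a x * r a x b y)
    (x : Fin mA) (y : Fin mB) :
    strat1 pA r none (some b) x y = ((mA : ℝ) - 1) / mA * pB b y := by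
  unfold strat1
  have key : ∀ x' : Fin mA,
      (∑ a' : Fin dA, pA a' x' / mA *
        (if x = x' then (if (none : Option (Fin dA)) = some a' then (1:ℝ) else 0)
          else (if (none : Option (Fin dA)) = none then 1 else 0)) * r a' x' b y)
      = if x = x' then 0 else pB b y / mA := by
    intro x'
    by_cases h : x = x'
    · simp [h]
    · have hterm : ∀ a' : Fin dA, pA a' x' / mA *
          (if x = x' then (if (none : Option (Fin dA)) = some a' then (1:ℝ) else 0)
            else (if (none : Option (Fin dA)) = none then 1 else 0)) * r a' x' b y
          = p a' b x' y / mA := fun a' => by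
        rw [if_neg h, hr a' b x' y]; simp; ring
      rw [Finset.sum_congr rfl fun a' _ => hterm a', if_neg h, ← hpB b x' y,
        Finset.sum_div]
  rw [Finset.sum_congr rfl fun x' _ => key x']
  have h1 : ∀ x' : Fin mA, (if x = x' then (0:ℝ) else pB b y / mA)
      = pB b y / mA - (if x = x' then pB b y / mA else 0) := by
    intro x'; by_cases h : x = x' <;> simp [h]
  simp only [Finset.sum_congr rfl fun x' _ => h1 x', Finset.sum_sub_distrib,
    Finset.sum_const, Finset.card_univ, Fintype.card_fin, Finset.sum_ite_eq,
    Finset.mem_univ, if_true, nsmul_eq_mul]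
  have hmA : (mA : ℝ) ≠ 0 := Nat.cast_ne_zero.mpr x.pos.ne'
  field_simp

lemma strat2_ab {dA dB mA mB : ℕ} (p : Fin dA → Fin dB → Fin mA → Fin mB → ℝ)
    (pA : Fin dA → Fin mA → ℝ) (a : Fin dA) (b : Fin dB) (x : Fin mA) (y : Fin mB) :
    strat2 p pA (some a) (some b) x y = (1 / mB) * p a b x y := by
  unfold strat2
  congr 1
  rw [Finset.sum_congr rfl (g := fun y' => if y' = y then p a b x y else 0)
    (fun y' _ => by by_cases h : y' = y <;> simp [h])]
  simp [Finset.sum_ite_eq]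

lemma strat2_anone {dA dB mA mB : ℕ} (p : Fin dA → Fin dB → Fin mA → Fin mB → ℝ)
    (pA : Fin dA → Fin mA → ℝ) (a : Fin dA) (x : Fin mA) (y : Fin mB) :
    strat2 p pA (some a) none x y = (1 / mB) * (((mB : ℝ) - 1) * pA a x) := by
  unfold strat2
  congr 1
  rw [Finset.sum_congr rfl (g := fun y' => pA a x - if y' = y then pA a x else 0)
    (fun y' _ => by by_cases h : y' = y <;> simp [h])]
  simp only [Finset.sum_sub_distrib, Finset.sum_const, Finset.card_univ,
    Fintype.card_fin, Finset.sum_ite_eq', Finset.mem_univ, if_true, nsmul_eq_mul]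
  ring

lemma strat2_none {dA dB mA mB : ℕ} (p : Fin dA → Fin dB → Fin mA → Fin mB → ℝ)
    (pA : Fin dA → Fin mA → ℝ) (ob : Option (Fin dB)) (x : Fin mA) (y : Fin mB) :
    strat2 p pA none ob x y = 0 := by
  unfold strat2
  rw [Finset.sum_eq_zero (fun y' _ => by cases ob <;> by_cases h : y' = y <;> simp [h])]
  simp

/-- The mixture with weights `s·t`, `s·(1−t)`, `1−s` of the three SRQ strategies
reproduces the lossy long-path correlations of Eq. (41)/(47). -/
theorem stmt9 {dA dB mA mB : ℕ} (hdA : 0 < dA) (hdB : 0 < dB)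
    (hmA : 0 < mA) (hmB : 0 < mB)
    (p : Fin dA → Fin dB → Fin mA → Fin mB → ℝ)
    (pA : Fin dA → Fin mA → ℝ) (pB : Fin dB → Fin mB → ℝ)
    (r : Fin dA → Fin mA → Fin dB → Fin mB → ℝ)
    (hpA : ∀ a x y, ∑ b : Fin dB, p a b x y = pA a x)
    (hpB : ∀ b x y, ∑ a : Fin dA, p a b x y = pB b y)
    (hr : ∀ a b x y, p a b x y = pA a x * r a x b y)
    (s t : ℝ) (hs : s ∈ Set.Icc (0:ℝ) 1) (ht : t ∈ Set.Icc (0:ℝ) 1) :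
    ∀ (x : Fin mA) (y : Fin mB),
      (∀ (a : Fin dA) (b : Fin dB),
        s * t * strat1 pA r (some a) (some b) x y +
          s * (1 - t) * strat2 p pA (some a) (some b) x y +
          (1 - s) * strat3 (some a) (some b) =
        s * (t / mA + (1 - t) / mB) * p a b x y) ∧
      (∀ a : Fin dA,
        s * t * strat1 pA r (some a) none x y +
          s * (1 - t) * strat2 p pA (some a) none x y +
          (1 - s) * strat3 (some a) (none : Option (Fin dB)) =
        s * (1 - t) * (((mB : ℝ) - 1) / mB) * pA a x) ∧
      (∀ b : Fin dB,
        s * t * strat1 pA r none (some b) x y +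
          s * (1 - t) * strat2 p pA none (some b) x y +
          (1 - s) * strat3 (none : Option (Fin dA)) (some b) =
        s * t * (((mA : ℝ) - 1) / mA) * pB b y) ∧
      (s * t * strat1 pA r none none x y +
          s * (1 - t) * strat2 p pA none none x y +
          (1 - s) * strat3 (none : Option (Fin dA)) (none : Option (Fin dB)) =
        1 - s) := by
  intro x y
  have hmA' : (mA : ℝ) ≠ 0 := Nat.cast_ne_zero.mpr hmA.ne'
  have hmB' : (mB : ℝ) ≠ 0 := Nat.cast_ne_zero.mpr hmB.ne'
  refine ⟨fun a b => ?_, fun a => ?_, fun b => ?_, ?_⟩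
  · rw [strat1_ab, strat2_ab, hr a b x y]
    simp only [strat3, reduceCtorEq, false_and, if_false]
    field_simp
    ring
  · rw [strat1_anone, strat2_anone]
    simp only [strat3, reduceCtorEq, false_and, if_false]
    field_simp
    ring
  · rw [strat1_noneb pA r b p pB hpB hr, strat2_none]
    simp only [strat3, reduceCtorEq, and_false, if_false]
    ring
  · rw [strat1_anone, strat2_none]
    simp only [strat3, and_self, if_true]
    ring
end

section
/- For θ− ∈ (0, π/2) and for each pair (β0, β1) ∈ {0,1}², the 2×2 Hermitian matrix C_{β0β1}(θ−) = δ_{β0β1}·(−1)^{β0}·(Z + cos(θ−)·I) + (1 − δ_{β0β1})·(−1)^{β1}·sin(θ−)·X is bounded above in the Loewner order by I + cos(θ−)·Z. -/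
/-!
Write `p = cos (θ/2)` and `q = sin (θ/2)`, so that `cos θ = p² - q²`, `sin θ = 2pq` and
`p² + q² = 1`. Then the gap `I + cos θ · Z - C_{β0β1}` is, case by case, a nonnegative multiple of
a real rank-one matrix `v vᵀ`: `v = (0, 2q)` for `β0 = β1 = 0`, `v = (2p, 0)` for `β0 = β1 = 1`,
and `2 · v vᵀ` with `v = (p, ±q)` when `β0 ≠ β1`.
-/

open Matrix ComplexOrder

def observableC (c s : ℝ) (β0 β1 : Fin 2) : Matrix (Fin 2) (Fin 2) ℂ :=
  (if β0 = β1 then ((-1 : ℂ) ^ (β0 : ℕ)) else 0) • (pauliZ + (c : ℂ) • 1) +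
    (if β0 = β1 then 0 else ((-1 : ℂ) ^ (β1 : ℕ)) * (s : ℂ)) • pauliX

lemma posSemidef_vecMulVec_ofReal {n : Type*} [Fintype n] (v : n → ℝ) :
    (vecMulVec (fun i ↦ (v i : ℂ)) (fun i ↦ (v i : ℂ))).PosSemidef := by
  have hstar : star (fun i ↦ (v i : ℂ)) = fun i ↦ (v i : ℂ) := by
    ext i
    simp
  simpa only [hstar] using posSemidef_vecMulVec_self_star (fun i ↦ (v i : ℂ))

lemma posSemidef_one_add_smul_pauliZ_sub_observableC (p q : ℝ) (hpq : p ^ 2 + q ^ 2 = 1)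
    (β0 β1 : Fin 2) :
    (1 + ((p ^ 2 - q ^ 2 : ℝ) : ℂ) • pauliZ -
      observableC (p ^ 2 - q ^ 2) (2 * p * q) β0 β1).PosSemidef := by
  have two_nonneg : (0 : ℂ) ≤ 2 := by norm_num
  have hpqC : (p : ℂ) ^ 2 + (q : ℂ) ^ 2 = 1 := by exact_mod_cast hpq
  fin_cases β0 <;> fin_cases β1 <;>
    [convert posSemidef_vecMulVec_ofReal ![0, 2 * q] using 1;
     convert (posSemidef_vecMulVec_ofReal ![p, q]).smul two_nonneg using 1;
     convert (posSemidef_vecMulVec_ofReal ![p, -q]).smul two_nonneg using 1;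
     convert posSemidef_vecMulVec_ofReal ![2 * p, 0] using 1] <;>
  ext i j <;> fin_cases i <;> fin_cases j <;>
  simp [observableC, pauliX, pauliZ, vecMulVec_apply] <;> grind

theorem stmt11_general (θ : ℝ) (β0 β1 : Fin 2) :
    (((1 : Matrix (Fin 2) (Fin 2) ℂ) +
        (Real.cos θ : ℂ) • (!![1, 0; 0, -1] : Matrix (Fin 2) (Fin 2) ℂ)) -
      ((if β0 = β1 then ((-1 : ℂ) ^ (β0 : ℕ)) else 0) •
          ((!![1, 0; 0, -1] : Matrix (Fin 2) (Fin 2) ℂ) +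
            (Real.cos θ : ℂ) • (1 : Matrix (Fin 2) (Fin 2) ℂ)) +
        (if β0 = β1 then 0 else ((-1 : ℂ) ^ (β1 : ℕ)) * (Real.sin θ : ℂ)) •
          (!![0, 1; 1, 0] : Matrix (Fin 2) (Fin 2) ℂ))).PosSemidef := by
  have half : 2 * (θ / 2) = θ := by ring
  have hcos : Real.cos θ = Real.cos (θ / 2) ^ 2 - Real.sin (θ / 2) ^ 2 := by
    rw [← Real.cos_two_mul', half]
  have hsin : Real.sin θ = 2 * Real.cos (θ / 2) * Real.sin (θ / 2) := by
    rw [mul_right_comm, ← Real.sin_two_mul, half]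
  rw [hcos, hsin]
  exact posSemidef_one_add_smul_pauliZ_sub_observableC _ _ (Real.cos_sq_add_sin_sq _) β0 β1

/-- For `θ− ∈ (0, π/2)`, each matrix
`C_{β0β1}(θ−) = δ_{β0β1}(−1)^{β0}(Z + cosθ−·I) + (1−δ_{β0β1})(−1)^{β1} sinθ−·X`
is bounded above by `I + cosθ−·Z` in the Loewner order. -/
theorem stmt11 (θ : ℝ) (hθ : θ ∈ Set.Ioo 0 (Real.pi / 2)) (β0 β1 : Fin 2) :
    (((1 : Matrix (Fin 2) (Fin 2) ℂ) +
        (Real.cos θ : ℂ) • (!![1, 0; 0, -1] : Matrix (Fin 2) (Fin 2) ℂ)) -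
      ((if β0 = β1 then ((-1 : ℂ) ^ (β0 : ℕ)) else 0) •
          ((!![1, 0; 0, -1] : Matrix (Fin 2) (Fin 2) ℂ) +
            (Real.cos θ : ℂ) • (1 : Matrix (Fin 2) (Fin 2) ℂ)) +
        (if β0 = β1 then 0 else ((-1 : ℂ) ^ (β1 : ℕ)) * (Real.sin θ : ℂ)) •
          (!![0, 1; 1, 0] : Matrix (Fin 2) (Fin 2) ℂ))).PosSemidef :=
  stmt11_general θ β0 β1
end

section
/- For θ− ∈ (0, π/2), set η = 1/(1 + cos θ−). Define the operators N_{00} = (cosθ−/(1+cosθ−))·(I + Z), N_{01} = (1/2)[−(sinθ−/(1+cosθ−))·X + ((1−cosθ−)/(1+cosθ−))·(I+Z)/2 + (I−Z)/2], N_{10} = (1/2)[(sinθ−/(1+cosθ−))·X + ((1−cosθ−)/(1+cosθ−))·(I+Z)/2 + (I−Z)/2], N_{11} = 0. Then: (a) each N_{β0β1} is positive semidefinite; (b) Σ N_{β0β1} = I; (c) the marginals satisfy N_{00}+N_{01}−N_{10}−N_{11} = η·B0 + (1−η)·I and N_{00}−N_{01}+N_{10}−N_{11} = η·B1 + (1−η)·I,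 where B0 = cosθ−·Z − sinθ−·X and B1 = cosθ−·Z + sinθ−·X (the case θ+ = 0 of Eq. (61)). -/
open Matrix ComplexOrder

set_option maxHeartbeats 1000000 in
/-- The explicit parent POVM `{N_{β0β1}}` making the lossy observables
`η·B0 + (1−η)·I`, `η·B1 + (1−η)·I` with `η = 1/(1+cosθ−)`,
`B0 = cosθ−·Z − sinθ−·X`, `B1 = cosθ−·Z + sinθ−·X`, jointly measurable. -/
theorem stmt16 (θ : ℝ) (hθ : θ ∈ Set.Ioo 0 (Real.pi / 2))
    (η : ℝ) (hη : η = 1 / (1 + Real.cos θ))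
    (Z X I B0 B1 N00 N01 N10 N11 : Matrix (Fin 2) (Fin 2) ℂ)
    (hZ : Z = !![1, 0; 0, -1]) (hX : X = !![0, 1; 1, 0]) (hI : I = 1)
    (hB0 : B0 = (Real.cos θ : ℂ) • Z - (Real.sin θ : ℂ) • X)
    (hB1 : B1 = (Real.cos θ : ℂ) • Z + (Real.sin θ : ℂ) • X)
    (hN00 : N00 = ((Real.cos θ / (1 + Real.cos θ) : ℝ) : ℂ) • (I + Z))
    (hN01 : N01 = ((1 / 2 : ℝ) : ℂ) •
      ((-(((Real.sin θ / (1 + Real.cos θ) : ℝ) : ℂ))) • X +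
        (((1 - Real.cos θ) / (1 + Real.cos θ) : ℝ) : ℂ) • (((2 : ℂ))⁻¹ • (I + Z)) +
        ((2 : ℂ))⁻¹ • (I - Z)))
    (hN10 : N10 = ((1 / 2 : ℝ) : ℂ) •
      ((((Real.sin θ / (1 + Real.cos θ) : ℝ) : ℂ)) • X +
        (((1 - Real.cos θ) / (1 + Real.cos θ) : ℝ) : ℂ) • (((2 : ℂ))⁻¹ • (I + Z)) +
        ((2 : ℂ))⁻¹ • (I - Z)))
    (hN11 : N11 = 0) :
    N00.PosSemidef ∧ N01.PosSemidef ∧ N10.PosSemidef ∧ N11.PosSemidef ∧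
    N00 + N01 + N10 + N11 = I ∧
    N00 + N01 - N10 - N11 = (η : ℂ) • B0 + ((1 - η : ℝ) : ℂ) • I ∧
    N00 - N01 + N10 - N11 = (η : ℂ) • B1 + ((1 - η : ℝ) : ℂ) • I := by
  obtain ⟨hθ0, hθ1⟩ := hθ
  have hc : 0 < Real.cos θ := Real.cos_pos_of_mem_Ioo ⟨by linarith [Real.pi_pos], hθ1⟩
  have hs : 0 < Real.sin θ := Real.sin_pos_of_pos_of_lt_pi hθ0 (by linarith [Real.pi_pos])
  set c := Real.cos θ with hcdef
  set s := Real.sin θ with hsdef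
  have h1c : (1 : ℝ) + c ≠ 0 := by positivity
  have h1cC : (1 : ℂ) + (c : ℂ) ≠ 0 := by
    exact_mod_cast (Complex.ofReal_ne_zero.mpr h1c)
  have hpyth : s ^ 2 = 1 - c ^ 2 := by
    have := Real.sin_sq_add_cos_sq θ; nlinarith
  have hpythC : ((s : ℝ) : ℂ) ^ 2 = 1 - ((c : ℝ) : ℂ) ^ 2 := by
    exact_mod_cast congrArg (fun x : ℝ => (x : ℂ)) hpyth
  set r := Real.sqrt 2 with hrdef
  have hr2 : r ^ 2 = 2 := Real.sq_sqrt (by norm_num)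
  have hrC2 : ((r : ℝ) : ℂ) ^ 2 = 2 := by exact_mod_cast hr2
  have hrC0 : ((r : ℝ) : ℂ) ≠ 0 := by
    intro h; rw [h] at hrC2; norm_num at hrC2
  -- square root for N00
  have ht : 0 ≤ 2 * c / (1 + c) := by positivity
  set t := Real.sqrt (2 * c / (1 + c)) with htdef
  have ht2 : t ^ 2 = 2 * c / (1 + c) := Real.sq_sqrt ht
  have ht2C : ((t : ℝ) : ℂ) ^ 2 = 2 * (c : ℂ) / (1 + (c : ℂ)) := by
    rw [← Complex.ofReal_pow, ht2]; push_cast; ring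
  have hP00 : N00 = (!![((t : ℝ) : ℂ), 0; 0, 0])ᴴ * !![((t : ℝ) : ℂ), 0; 0, 0] := by
    subst hN00 hI hZ
    ext i j
    fin_cases i <;> fin_cases j <;>
      simp [Matrix.mul_apply, Fin.sum_univ_two, Matrix.conjTranspose_apply,
        Complex.conj_ofReal] <;>
      rw [← pow_two ((t : ℝ) : ℂ), ht2C] <;> field_simp <;> ring
  have hP01 : N01 = (!![-(s : ℂ) / ((1 + (c : ℂ)) * (r : ℝ)), 1 / ((r : ℝ) : ℂ); 0, 0])ᴴ *
      !![-(s : ℂ) / ((1 + (c : ℂ)) * (r : ℝ)), 1 / ((r : ℝ) : ℂ); 0, 0] := by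
    subst hN01 hI hZ hX
    ext i j
    fin_cases i <;> fin_cases j <;>
      simp [Matrix.mul_apply, Fin.sum_univ_two, Matrix.conjTranspose_apply,
        Complex.conj_ofReal, map_div₀] <;>
      field_simp <;>
      first
        | linear_combination ((1 - (c : ℂ)) * (1 + (c : ℂ)) ^ 2) * hrC2 -
            (2 * (1 + (c : ℂ))) * hpythC
        | (left; linear_combination (1 + (c : ℂ)) * hrC2)
        | (left; linear_combination hrC2)
        | linear_combination hrC2
        | linear_combination ((1 - (c : ℂ)) * (1 + (c : ℂ))) * hrC2 - 2 * hpythC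
        | linear_combination (2 * (1 - (c : ℂ) ^ 2)) * hrC2 - 4 * hpythC
        | linear_combination (-1 : ℂ) * hrC2
        | linear_combination (2 : ℂ) * hrC2
  have hP10 : N10 = (!![(s : ℂ) / ((1 + (c : ℂ)) * (r : ℝ)), 1 / ((r : ℝ) : ℂ); 0, 0])ᴴ *
      !![(s : ℂ) / ((1 + (c : ℂ)) * (r : ℝ)), 1 / ((r : ℝ) : ℂ); 0, 0] := by
    subst hN10 hI hZ hX
    ext i j
    fin_cases i <;> fin_cases j <;>
      simp [Matrix.mul_apply, Fin.sum_univ_two, Matrix.conjTranspose_apply,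
        Complex.conj_ofReal, map_div₀] <;>
      field_simp <;>
      first
        | linear_combination ((1 - (c : ℂ)) * (1 + (c : ℂ)) ^ 2) * hrC2 -
            (2 * (1 + (c : ℂ))) * hpythC
        | (left; linear_combination (1 + (c : ℂ)) * hrC2)
        | (left; linear_combination hrC2)
        | linear_combination hrC2
        | linear_combination ((1 - (c : ℂ)) * (1 + (c : ℂ))) * hrC2 - 2 * hpythC
        | linear_combination (2 * (1 - (c : ℂ) ^ 2)) * hrC2 - 4 * hpythC
        | linear_combination (-1 : ℂ) * hrC2
        | linear_combination (2 : ℂ) * hrC2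
  refine ⟨hP00 ▸ Matrix.posSemidef_conjTranspose_mul_self _,
    hP01 ▸ Matrix.posSemidef_conjTranspose_mul_self _,
    hP10 ▸ Matrix.posSemidef_conjTranspose_mul_self _,
    hN11 ▸ Matrix.PosSemidef.zero, ?_, ?_, ?_⟩ <;>
  · subst hN00 hN01 hN10 hN11 hI hZ hX hη
    try subst hB0
    try subst hB1
    rw [show (1 : Matrix (Fin 2) (Fin 2) ℂ) = !![1, 0; 0, 1] from Matrix.one_fin_two]
    ext i j
    fin_cases i <;> fin_cases j <;>
      simp [Matrix.add_apply, Matrix.sub_apply, Matrix.smul_apply] <;>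
      push_cast <;>
      field_simp <;>
      ring
end

section
/- For θ ∈ [0, π/4] and v ∈ [0,1], the correlations ⟨A0B1⟩ = ⟨A1B0⟩ = v·cosθ, ⟨A0B0⟩ = −⟨A1B1⟩ = v·sinθ violate the CHSH inequality |⟨A0B0⟩+⟨A0B1⟩+⟨A1B0⟩−⟨A1B1⟩| > 2 if and only if v > 1/(cosθ + sinθ), while they violate the SRQ inequality J^θ = tanθ⟨A0B0⟩ + ⟨A0B1⟩ + ⟨A1B0⟩ − tanθ⟨A1B1⟩ > √2/cosθ if and only if v > 1/√2. Moreover 1/√2 ≤ 1/(cosθ+sinθ) for all θ ∈ [0, π/4], with equality only at θ = π/4. -/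
open Real

/-- For the noisy optimal correlations of `J^θ` with visibility `v`:
CHSH is violated iff `v > 1/(cosθ + sinθ)`, the SRQ bound `√2/cosθ` on `J^θ` is
violated iff `v > 1/√2`, and `1/√2 ≤ 1/(cosθ+sinθ)` with equality only at `θ = π/4`. -/
theorem stmt19 (θ v : ℝ) (hθ : θ ∈ Set.Icc 0 (π / 4)) (hv : v ∈ Set.Icc (0 : ℝ) 1)
    (e00 e01 e10 e11 : ℝ)
    (h00 : e00 = v * Real.sin θ) (h01 : e01 = v * Real.cos θ)
    (h10 : e10 = v * Real.cos θ) (h11 : e11 = -(v * Real.sin θ)) :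
    (2 < |e00 + e01 + e10 - e11| ↔ 1 / (Real.cos θ + Real.sin θ) < v) ∧
    (Real.sqrt 2 / Real.cos θ <
        Real.tan θ * e00 + e01 + e10 - Real.tan θ * e11 ↔ 1 / Real.sqrt 2 < v) ∧
    1 / Real.sqrt 2 ≤ 1 / (Real.cos θ + Real.sin θ) ∧
    (1 / Real.sqrt 2 = 1 / (Real.cos θ + Real.sin θ) → θ = π / 4) := by
  obtain ⟨hθ0, hθ4⟩ := hθ
  obtain ⟨hv0, hv1⟩ := hv
  have hπ : (0:ℝ) < π := Real.pi_pos
  have hθlt : θ < π / 2 := lt_of_le_of_lt hθ4 (by linarith)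
  have hc : 0 < Real.cos θ := Real.cos_pos_of_mem_Ioo ⟨by linarith, hθlt⟩
  have hs : 0 ≤ Real.sin θ := Real.sin_nonneg_of_nonneg_of_le_pi hθ0 (by linarith)
  have hcs : 0 < Real.cos θ + Real.sin θ := by linarith
  have hsq2 : (0:ℝ) < Real.sqrt 2 := by positivity
  have hsq2sq : Real.sqrt 2 * Real.sqrt 2 = 2 := Real.mul_self_sqrt (by norm_num)
  have hsum : e00 + e01 + e10 - e11 = 2 * v * (Real.cos θ + Real.sin θ) := by
    rw [h00, h01, h10, h11]; ring
  have habs : |e00 + e01 + e10 - e11| = 2 * v * (Real.cos θ + Real.sin θ) := by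
    rw [hsum, abs_of_nonneg]; positivity
  refine ⟨?_, ?_, ?_, ?_⟩
  · rw [habs, div_lt_iff₀ hcs]
    constructor
    · intro h; nlinarith
    · intro h; nlinarith
  · have htan : Real.tan θ = Real.sin θ / Real.cos θ := Real.tan_eq_sin_div_cos θ
    have hJ : Real.tan θ * e00 + e01 + e10 - Real.tan θ * e11 = 2 * v / Real.cos θ := by
      rw [h00, h01, h10, h11, htan]
      have hpyth := Real.sin_sq_add_cos_sq θ
      field_simp
      nlinarith
    rw [hJ, div_lt_div_iff_of_pos_right hc, one_div, inv_lt_iff_one_lt_mul₀ hsq2]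
    constructor
    · intro h; nlinarith
    · intro h; nlinarith
  · -- cos θ + sin θ ≤ √2
    have key : Real.cos θ + Real.sin θ ≤ Real.sqrt 2 := by
      nlinarith [Real.sin_sq_add_cos_sq θ, sq_nonneg (Real.cos θ - Real.sin θ),
        sq_nonneg (Real.cos θ + Real.sin θ - Real.sqrt 2)]
    exact one_div_le_one_div_of_le hcs key
  · intro h
    have key : Real.cos θ + Real.sin θ = Real.sqrt 2 := by
      field_simp at h
      linarith [h]
    -- cos θ = sin θ
    have hcseq : Real.cos θ = Real.sin θ := by
      nlinarith [Real.sin_sq_add_cos_sq θ, sq_nonneg (Real.cos θ - Real.sin θ)]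
    have htan1 : Real.tan θ = 1 := by
      rw [Real.tan_eq_sin_div_cos, ← hcseq, div_self hc.ne']
    have h4 : Real.tan (π/4) = 1 := Real.tan_pi_div_four
    exact Real.injOn_tan ⟨by linarith, hθlt⟩ ⟨by linarith, by linarith⟩ (by rw [htan1, h4])
end
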